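/- Let A be a reversible JW-algebra with faithful normal state ρ. If x_n → x in bundle convergence in A, then the Cesàro means (1/n)∑_{k=1}^n x_k → x in bundle convergence in A. -/

import Mathlib

open Filter Finset
open scoped ComplexOrder Topology

/-!
For self-adjoint `a` and a projection `p`, `‖p a² p‖ = ‖(a p)* (a p)‖ = ‖a p‖²`, so for
self-adjoint sequences `‖p (x_n - l)² p‖ → 0` just says `x_n p → l p` in norm. With the same
sequence `D`, bundle convergence of `x_n` therefore gives `x_n p → l p` for each `p` of the
bundle, and the Cesàro means satisfy `x̄_n p = (1/n) ∑_{k<n} x_k p → l p` by the Cesàro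
theorem in the Banach space of operators.
-/

namespace JW

variable {H : Type*} [NormedAddCommGroup H] [InnerProductSpace ℂ H] [CompleteSpace H]

/-- Orthogonal projection predicate. -/
def IsProjection (p : H →L[ℂ] H) : Prop := IsIdempotentElem p ∧ IsSelfAdjoint p

/-- Loewner order: `a ≤ b` iff `b - a` is a positive operator. -/
def OpLE (a b : H →L[ℂ] H) : Prop := (b - a).IsPositive

/-- The Jordan product `a ∘ b = (ab + ba)/2`. -/
noncomputable def jord (a b : H →L[ℂ] H) : H →L[ℂ] H := (2⁻¹ : ℝ) • (a * b + b * a)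

/-- A real W*-algebra: a weakly closed real *-subalgebra `R ⊆ B(H)` with
`R ∩ iR = {0}` and `1 ∈ R`. -/
structure IsRealVNA (R : Set (H →L[ℂ] H)) : Prop where
  zero_mem : (0 : H →L[ℂ] H) ∈ R
  one_mem : (1 : H →L[ℂ] H) ∈ R
  add_mem : ∀ {a b : H →L[ℂ] H}, a ∈ R → b ∈ R → a + b ∈ R
  smul_mem : ∀ (r : ℝ) {a : H →L[ℂ] H}, a ∈ R → r • a ∈ R
  mul_mem : ∀ {a b : H →L[ℂ] H}, a ∈ R → b ∈ R → a * b ∈ R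
  star_mem : ∀ {a : H →L[ℂ] H}, a ∈ R → star a ∈ R
  inter_trivial : ∀ {a : H →L[ℂ] H}, a ∈ R → Complex.I • a ∈ R → a = 0
  wclosed : IsClosed ((ContinuousLinearMapWOT.ofCLM : (H →L[ℂ] H) → H →WOT[ℂ] H) '' R)

/-- The self-adjoint part of a set of operators; for a real W*-algebra `R`,
`saPart R` is the associated reversible JW-algebra. -/
def saPart (R : Set (H →L[ℂ] H)) : Set (H →L[ℂ] H) := {a | a ∈ R ∧ IsSelfAdjoint a}

/-- A faithful normal state on (the self-adjoint part of) an operator algebra `A`,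
given as a real-linear functional. Normality is expressed by sequential order
continuity with respect to strong convergence of increasing sequences. -/
structure IsFNState (A : Set (H →L[ℂ] H)) (ρ : (H →L[ℂ] H) →ₗ[ℝ] ℝ) : Prop where
  pos : ∀ a : H →L[ℂ] H, a.IsPositive → 0 ≤ ρ a
  one : ρ 1 = 1
  faithful : ∀ a ∈ A, a.IsPositive → ρ a = 0 → a = 0
  normal : ∀ (x : ℕ → H →L[ℂ] H) (y : H →L[ℂ] H),
    (∀ n, OpLE (x n) (x (n + 1))) → (∀ n, OpLE (x n) y) →
    (∀ ξ : H, Tendsto (fun n => x n ξ) atTop (𝓝 (y ξ))) →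
    Tendsto (fun n => ρ (x n)) atTop (𝓝 (ρ y))

/-- Membership in the bundle determined by a sequence `D` of positive elements of `A`:
nonzero projections `p ∈ A` with `sup_m ‖p(∑_{k≤m} D_k)p‖ < ∞` and `‖p D_m p‖ → 0`. -/
def InBundle (A : Set (H →L[ℂ] H)) (D : ℕ → H →L[ℂ] H) (p : H →L[ℂ] H) : Prop :=
  p ∈ A ∧ IsProjection p ∧ p ≠ 0 ∧
  (∃ C : ℝ, ∀ m : ℕ, ‖p * (∑ k ∈ Finset.range m, D k) * p‖ ≤ C) ∧
  Tendsto (fun m => ‖p * D m * p‖) atTop (𝓝 0)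

/-- Bundle convergence `x_n → l` in the JW-algebra `A` with state `ρ`. -/
def BundleConv (A : Set (H →L[ℂ] H)) (ρ : (H →L[ℂ] H) →ₗ[ℝ] ℝ)
    (x : ℕ → H →L[ℂ] H) (l : H →L[ℂ] H) : Prop :=
  ∃ D : ℕ → H →L[ℂ] H, (∀ m, D m ∈ A ∧ (D m).IsPositive) ∧
    Summable (fun m => ρ (D m)) ∧
    ∀ p, InBundle A D p → Tendsto (fun n => ‖p * (x n - l) ^ 2 * p‖) atTop (𝓝 0)

/-- Almost uniform convergence in the JW-algebra `A` with state `ρ`. -/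
def AUConv (A : Set (H →L[ℂ] H)) (ρ : (H →L[ℂ] H) →ₗ[ℝ] ℝ)
    (x : ℕ → H →L[ℂ] H) (l : H →L[ℂ] H) : Prop :=
  ∀ ε > (0 : ℝ), ∃ p : H →L[ℂ] H, p ∈ A ∧ IsProjection p ∧ ρ (1 - p) < ε ∧
    Tendsto (fun n => ‖p * (x n - l) ^ 2 * p‖) atTop (𝓝 0)

/-- The enveloping (complex) algebra `W(R) = R + iR` of a real W*-algebra `R`. -/
def envAlg (R : Set (H →L[ℂ] H)) : Set (H →L[ℂ] H) :=
  {w | ∃ u ∈ R, ∃ v ∈ R, w = u + Complex.I • v}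

/-- Bundle convergence in a von Neumann algebra `W` with (the restriction to the reals of)
a state `ρ₁`: there is a sequence `D` of positives in `W` with `∑ ρ₁(D_m) < ∞` such that
`‖(x_n - l)p‖ → 0` for every projection in the corresponding bundle. -/
def BundleConvW (W : Set (H →L[ℂ] H)) (ρ₁ : (H →L[ℂ] H) →ₗ[ℂ] ℂ)
    (x : ℕ → H →L[ℂ] H) (l : H →L[ℂ] H) : Prop :=
  ∃ D : ℕ → H →L[ℂ] H, (∀ m, D m ∈ W ∧ (D m).IsPositive) ∧
    Summable (fun m => (ρ₁ (D m)).re) ∧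
    ∀ p, InBundle W D p → Tendsto (fun n => ‖(x n - l) * p‖) atTop (𝓝 0)

section CStarRing

variable {E : Type*} [NormedRing E] [StarRing E] [CStarRing E]

theorem _root_.IsSelfAdjoint.norm_mul_sq_mul {a p : E} (ha : IsSelfAdjoint a)
    (hp : IsSelfAdjoint p) :
    ‖p * a ^ 2 * p‖ = ‖a * p‖ ^ 2 := by
  have h : p * a ^ 2 * p = star (a * p) * (a * p) := by
    rw [star_mul, ha.star_eq, hp.star_eq, sq, mul_assoc, mul_assoc, mul_assoc]
  rw [h, CStarRing.norm_star_mul_self, sq]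

theorem tendsto_norm_mul_sub_sq_mul_iff {ι : Type*} {f : Filter ι} {x : ι → E} {l p : E}
    (hx : ∀ i, IsSelfAdjoint (x i)) (hl : IsSelfAdjoint l) (hp : IsSelfAdjoint p) :
    Tendsto (fun i => ‖p * (x i - l) ^ 2 * p‖) f (𝓝 0) ↔
      Tendsto (fun i => x i * p) f (𝓝 (l * p)) := by
  simp_rw [tendsto_iff_norm_sub_tendsto_zero (b := l * p), ← sub_mul,
    ((hx _).sub hl).norm_mul_sq_mul hp]
  constructor
  · intro h
    simpa [Function.comp_def, Real.sqrt_sq (norm_nonneg _)] using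
      (Real.continuous_sqrt.tendsto 0).comp h
  · intro h
    simpa using h.pow 2

end CStarRing

theorem statement13_general (R : Set (H →L[ℂ] H))
    (ρ : (H →L[ℂ] H) →ₗ[ℝ] ℝ)
    (x : ℕ → H →L[ℂ] H) (hx : ∀ n, x n ∈ saPart R)
    (l : H →L[ℂ] H) (hl : l ∈ saPart R)
    (h : BundleConv (saPart R) ρ x l) :
    BundleConv (saPart R) ρ
      (fun n => ((n : ℝ)⁻¹) • ∑ k ∈ Finset.range n, x k) l := by
  obtain ⟨D, hD, hsum, hconv⟩ := h
  refine ⟨D, hD, hsum, fun p hp => ?_⟩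
  have hp_sa : IsSelfAdjoint p := hp.2.1.2
  have hmean_sa : ∀ n : ℕ, IsSelfAdjoint ((n : ℝ)⁻¹ • ∑ k ∈ Finset.range n, x k) :=
    fun n => (IsSelfAdjoint.all _).smul (isSelfAdjoint_sum _ fun k _ => (hx k).2)
  have hxp := (tendsto_norm_mul_sub_sq_mul_iff (fun n => (hx n).2) hl.2 hp_sa).1 (hconv p hp)
  rw [tendsto_norm_mul_sub_sq_mul_iff hmean_sa hl.2 hp_sa]
  simpa only [Finset.sum_mul, smul_mul_assoc] using hxp.cesaro_smul

/-- bundle convergence `x_n → x` in `A` implies bundle convergence of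
the Cesàro means `(1/n) ∑_{k=1}^n x_k → x` in `A`. -/
theorem statement13 (R : Set (H →L[ℂ] H)) (hR : IsRealVNA R)
    (ρ : (H →L[ℂ] H) →ₗ[ℝ] ℝ) (hρ : IsFNState (saPart R) ρ)
    (x : ℕ → H →L[ℂ] H) (hx : ∀ n, x n ∈ saPart R)
    (l : H →L[ℂ] H) (hl : l ∈ saPart R)
    (h : BundleConv (saPart R) ρ x l) :
    BundleConv (saPart R) ρ
      (fun n => ((n : ℝ)⁻¹) • ∑ k ∈ Finset.range n, x k) l :=
  statement13_general R ρ x hx l hl h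

end JW
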